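/- arXiv:2504.14393 — 2 statements merged into one kernel-verified Lean document; each statement's English description precedes it below -/
import Mathlib

section
/- The collection Con_A(B_n) of lattice congruences on the weak order on B_n that arise as restrictions of lattice congruences on the weak order on S_{2n} is closed under meet and join in the congruence lattice Con(B_n); that is, Con_A(B_n) induces a sublattice of Con(B_n). -/
/-- The inversion set of a permutation of the `2n` points. -/
def invSet {n : ℕ} (π : Equiv.Perm (Fin (2 * n))) : Set (Fin (2 * n) × Fin (2 * n)) :=
  {p | p.1 < p.2 ∧ π.symm p.2 < π.symm p.1}

/-- The right weak order on `S_{2n}`: containment of inversion sets. -/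
def wle {n : ℕ} (u w : Equiv.Perm (Fin (2 * n))) : Prop := invSet u ⊆ invSet w

/-- `m` is the least upper bound of `x` and `y` with respect to `le`. -/
def IsLUBr {α : Type*} (le : α → α → Prop) (x y m : α) : Prop :=
  le x m ∧ le y m ∧ ∀ b, le x b → le y b → le m b

/-- `m` is the greatest lower bound of `x` and `y` with respect to `le`. -/
def IsGLBr {α : Type*} (le : α → α → Prop) (x y m : α) : Prop :=
  le m x ∧ le m y ∧ ∀ b, le b x → le b y → le b m

/-- A lattice congruence of the lattice given by the order `le`: an equivalence
relation compatible with joins and meets. -/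
def IsCongr {α : Type*} (le : α → α → Prop) (r : Setoid α) : Prop :=
  (∀ x1 x2 y1 y2 m1 m2, r.r x1 x2 → r.r y1 y2 →
      IsLUBr le x1 y1 m1 → IsLUBr le x2 y2 m2 → r.r m1 m2) ∧
  (∀ x1 x2 y1 y2 m1 m2, r.r x1 x2 → r.r y1 y2 →
      IsGLBr le x1 y1 m1 → IsGLBr le x2 y2 m2 → r.r m1 m2)

/-- The hyperoctahedral group `B_n`, realized as the centrally symmetric
permutations of the `2n` points: those fixed by conjugation by `w₀`. -/
def BGrp (n : ℕ) : Type :=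
  {π : Equiv.Perm (Fin (2 * n)) // Fin.revPerm * π * Fin.revPerm = π}

/-- The weak order on `B_n`, induced from the weak order on `S_{2n}`. -/
def ble {n : ℕ} (x y : BGrp n) : Prop := wle x.val y.val

/-- The congruence `r'` on `S_{2n}` restricts to the congruence `r` on `B_n`. -/
def Restricts {n : ℕ} (r' : Setoid (Equiv.Perm (Fin (2 * n)))) (r : Setoid (BGrp n)) : Prop :=
  ∀ x y : BGrp n, r.r x y ↔ r'.r x.val y.val

/-- `Con_A(B_n)`: the congruences of the weak order on `B_n` that are
restrictions of congruences of the weak order on `S_{2n}`. -/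
def ConA {n : ℕ} (r : Setoid (BGrp n)) : Prop :=
  ∃ r' : Setoid (Equiv.Perm (Fin (2 * n))), IsCongr wle r' ∧ Restricts r' r

/-- Refinement order on equivalence relations. -/
def setle {α : Type*} (r s : Setoid α) : Prop := ∀ x y, r.r x y → s.r x y


/-!
Meets: if `rᵢ` is the restriction of the congruence `rᵢ'` of `S_{2n}`, then `r₁ ⊓ r₂` is the
restriction of `r₁' ⊓ r₂'`, and every restriction is a congruence because `B_n` is a sublattice.

Joins: first make the lifts `rᵢ'` invariant under conjugation by `w₀` (intersect with their
conjugates), then take their join `J` in `Con(S_{2n})`, the equivalence closure of `r₁' ∪ r₂'`;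
this needs the weak order on `S_{2n}` to be a lattice, which holds because the biclosed
relations are exactly the inversion relations. `J` restricts to a congruence of `B_n` above
`r₁, r₂`, hence above their join `s`. Conversely, `z ↦ z ∧ w₀ z w₀` fixes `B_n` and sends each
`rᵢ'`-step to an `rᵢ`-step, so a `J`-chain between elements of `B_n` becomes an `s`-chain.
-/

open Function Relation

section Relational

variable {α β : Type*} {le : α → α → Prop}

theorem IsLUBr.symm {x y m : α} (h : IsLUBr le x y m) : IsLUBr le y x m :=
  ⟨h.2.1, h.1, fun b hx hy => h.2.2 b hy hx⟩

theorem IsGLBr.symm {x y m : α} (h : IsGLBr le x y m) : IsGLBr le y x m :=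
  IsLUBr.symm (le := flip le) h

theorem IsLUBr.unique (hanti : Std.Antisymm le) {x y m m' : α} (h : IsLUBr le x y m)
    (h' : IsLUBr le x y m') : m = m' :=
  hanti.antisymm _ _ (h.2.2 _ h'.1 h'.2.1) (h'.2.2 _ h.1 h.2.1)

theorem IsGLBr.unique (hanti : Std.Antisymm le) {x y m m' : α} (h : IsGLBr le x y m)
    (h' : IsGLBr le x y m') : m = m' :=
  IsLUBr.unique (le := flip le) ⟨fun a b h h' => hanti.antisymm a b h' h⟩ h h'

theorem IsLUBr.map {le' : β → β → Prop} {φ : α → β} (hφ : ∀ a b, le' (φ a) (φ b) ↔ le a b)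
    (hφs : Surjective φ) {x y m : α} (h : IsLUBr le x y m) : IsLUBr le' (φ x) (φ y) (φ m) := by
  refine ⟨(hφ _ _).2 h.1, (hφ _ _).2 h.2.1, fun b hx hy => ?_⟩
  obtain ⟨b, rfl⟩ := hφs b
  exact (hφ _ _).2 (h.2.2 b ((hφ _ _).1 hx) ((hφ _ _).1 hy))

theorem IsGLBr.map {le' : β → β → Prop} {φ : α → β} (hφ : ∀ a b, le' (φ a) (φ b) ↔ le a b)
    (hφs : Surjective φ) {x y m : α} (h : IsGLBr le x y m) : IsGLBr le' (φ x) (φ y) (φ m) :=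
  IsLUBr.map (le := flip le) (le' := flip le') (fun a b => hφ b a) hφs h

theorem IsLUBr.of_subtype {p : α → Prop} (hanti : Std.Antisymm le)
    (hlub : ∀ x y, ∃ m, IsLUBr le x y m) (hp : ∀ x y m, p x → p y → IsLUBr le x y m → p m)
    {x y m : Subtype p} (h : IsLUBr (fun a b : Subtype p => le a b) x y m) :
    IsLUBr le x y m := by
  obtain ⟨j, hj⟩ := hlub x y
  have hjm : le j m := hj.2.2 m h.1 h.2.1
  have hmj : le m j := h.2.2 ⟨j, hp _ _ _ x.2 y.2 hj⟩ hj.1 hj.2.1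
  rwa [hanti.antisymm _ _ hmj hjm]

theorem IsGLBr.of_subtype {p : α → Prop} (hanti : Std.Antisymm le)
    (hglb : ∀ x y, ∃ m, IsGLBr le x y m) (hp : ∀ x y m, p x → p y → IsGLBr le x y m → p m)
    {x y m : Subtype p} (h : IsGLBr (fun a b : Subtype p => le a b) x y m) :
    IsGLBr le x y m :=
  IsLUBr.of_subtype (le := flip le) ⟨fun a b h h' => hanti.antisymm a b h' h⟩ hglb hp h

/-- Half of `IsCongr`: by definition `IsCongr le r` is `JoinCompat le r ∧ JoinCompat (flip le) r`,
since `IsGLBr le = IsLUBr (flip le)`. -/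
def JoinCompat (le : α → α → Prop) (r : Setoid α) : Prop :=
  ∀ x1 x2 y1 y2 m1 m2, r x1 x2 → r y1 y2 → IsLUBr le x1 y1 m1 → IsLUBr le x2 y2 m2 → r m1 m2

namespace JoinCompat

variable {r s : Setoid α}

theorem inf (hr : JoinCompat le r) (hs : JoinCompat le s) : JoinCompat le (r ⊓ s) :=
  fun _ _ _ _ _ _ hx hy h1 h2 => ⟨hr _ _ _ _ _ _ hx.1 hy.1 h1 h2, hs _ _ _ _ _ _ hx.2 hy.2 h1 h2⟩

theorem comap {le' : β → β → Prop} {φ : β → α}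
    (hφ : ∀ {x y m}, IsLUBr le' x y m → IsLUBr le (φ x) (φ y) (φ m)) (hr : JoinCompat le r) :
    JoinCompat le' (r.comap φ) :=
  fun _ _ _ _ _ _ hx hy h1 h2 => hr _ _ _ _ _ _ hx hy (hφ h1) (hφ h2)

theorem sup_of_same_right (hlub : ∀ x y, ∃ m, IsLUBr le x y m) (hr : JoinCompat le r)
    (hs : JoinCompat le s) {x1 x2 : α} (hx : (r ⊔ s) x1 x2) (y : α) {m1 m2 : α}
    (h1 : IsLUBr le x1 y m1) (h2 : IsLUBr le x2 y m2) : (r ⊔ s) m1 m2 := by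
  rw [Setoid.sup_eq_eqvGen] at hx ⊢
  induction hx generalizing m1 m2 with
  | rel a b hab =>
    exact .rel _ _ (hab.imp (hr _ _ _ _ _ _ · (r.refl y) h1 h2) (hs _ _ _ _ _ _ · (s.refl y) h1 h2))
  | refl a => exact .rel _ _ (.inl (hr _ _ _ _ _ _ (r.refl a) (r.refl y) h1 h2))
  | symm a b _ ih => exact .symm _ _ (ih h2 h1)
  | trans a b c _ _ ih1 ih2 =>
    obtain ⟨j, hj⟩ := hlub b y
    exact .trans _ _ _ (ih1 h1 hj) (ih2 hj h2)

theorem sup (hlub : ∀ x y, ∃ m, IsLUBr le x y m) (hr : JoinCompat le r) (hs : JoinCompat le s) :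
    JoinCompat le (r ⊔ s) := by
  intro x1 x2 y1 y2 m1 m2 hx hy h1 h2
  obtain ⟨j, hj⟩ := hlub x2 y1
  exact (r ⊔ s).trans (sup_of_same_right hlub hr hs hx y1 h1 hj)
    (sup_of_same_right hlub hr hs hy x2 hj.symm h2.symm)

end JoinCompat

namespace IsCongr

variable {r s : Setoid α}

theorem inf (hr : IsCongr le r) (hs : IsCongr le s) : IsCongr le (r ⊓ s) :=
  ⟨JoinCompat.inf hr.1 hs.1, JoinCompat.inf hr.2 hs.2⟩

theorem comap {le' : β → β → Prop} {φ : β → α}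
    (hlub : ∀ {x y m}, IsLUBr le' x y m → IsLUBr le (φ x) (φ y) (φ m))
    (hglb : ∀ {x y m}, IsGLBr le' x y m → IsGLBr le (φ x) (φ y) (φ m)) (hr : IsCongr le r) :
    IsCongr le' (r.comap φ) :=
  ⟨JoinCompat.comap hlub hr.1, JoinCompat.comap (le := flip le) (le' := flip le') hglb hr.2⟩

theorem sup (hlub : ∀ x y, ∃ m, IsLUBr le x y m) (hglb : ∀ x y, ∃ m, IsGLBr le x y m)
    (hr : IsCongr le r) (hs : IsCongr le s) : IsCongr le (r ⊔ s) :=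
  ⟨JoinCompat.sup hlub hr.1 hs.1, JoinCompat.sup (le := flip le) hglb hr.2 hs.2⟩

end IsCongr

end Relational

section Biclosed

variable {α : Type*} [LinearOrder α]

structure IsBiclosed (R : α → α → Prop) : Prop where
  lt : ∀ ⦃a b⦄, R a b → a < b
  trans : ∀ ⦃a b c⦄, R a b → R b c → R a c
  cotrans : ∀ ⦃a b c⦄, a < b → b < c → R a c → R a b ∨ R b c

theorem IsBiclosed.transGen_or {R S : α → α → Prop} (hR : IsBiclosed R) (hS : IsBiclosed S) :
    IsBiclosed (TransGen fun a b => R a b ∨ S a b) where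
  lt a b h := by
    induction h with
    | single h => exact h.elim (hR.lt ·) (hS.lt ·)
    | tail _ h ih => exact ih.trans (h.elim (hR.lt ·) (hS.lt ·))
  trans _ _ _ := TransGen.trans
  cotrans a j c haj hjc h := by
    have step : ∀ ⦃a b c⦄, a < b → b < c → (R a c ∨ S a c) →
        (R a b ∨ S a b) ∨ (R b c ∨ S b c) := fun a b c hab hbc h => h.elim
      (fun h => (hR.cotrans hab hbc h).imp .inl .inl)
      (fun h => (hS.cotrans hab hbc h).imp .inr .inr)
    induction h generalizing j with
    | single h => exact (step haj hjc h).imp .single .single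
    | @tail b c hab hbc ih =>
      rcases lt_trichotomy j b with hjb | rfl | hbj
      · exact (ih j haj hjb).imp id (·.tail hbc)
      · exact .inl hab
      · exact (step hbj hjc hbc).imp hab.tail .single

/-- `Precedes R a b`: `a` is listed before `b` by a permutation whose inversions are `R`. -/
def Precedes (R : α → α → Prop) (a b : α) : Prop := (a < b ∧ ¬R a b) ∨ (b < a ∧ R b a)

theorem IsBiclosed.isStrictTotalOrder_precedes {R : α → α → Prop} (hR : IsBiclosed R) :
    IsStrictTotalOrder α (Precedes R) where
  trichotomous a b hab hba := by
    by_contra hne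
    rcases lt_or_gt_of_ne hne with h | h
    · by_cases hR' : R a b
      exacts [hba (.inr ⟨h, hR'⟩), hab (.inl ⟨h, hR'⟩)]
    · by_cases hR' : R b a
      exacts [hab (.inr ⟨h, hR'⟩), hba (.inl ⟨h, hR'⟩)]
  irrefl a := by rintro (⟨h, _⟩ | ⟨h, _⟩) <;> exact lt_irrefl a h
  trans a b c := by
    rintro (⟨hab, hnab⟩ | ⟨hba, hba'⟩) (⟨hbc, hnbc⟩ | ⟨hcb, hcb'⟩)
    · exact .inl ⟨hab.trans hbc, fun h => (hR.cotrans hab hbc h).elim hnab hnbc⟩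
    · rcases lt_trichotomy a c with h | rfl | h
      · exact .inl ⟨h, fun hac => hnab (hR.trans hac hcb')⟩
      · exact absurd hcb' hnab
      · exact .inr ⟨h, (hR.cotrans h hab hcb').resolve_right hnab⟩
    · rcases lt_trichotomy a c with h | rfl | h
      · exact .inl ⟨h, fun hac => hnbc (hR.trans hba' hac)⟩
      · exact absurd hba' hnbc
      · exact .inr ⟨h, (hR.cotrans hbc h hba').resolve_left hnbc⟩
    · exact .inr ⟨hcb.trans hba, hR.trans hcb' hba'⟩

end Biclosed

theorem exists_equiv_fin_lt_iff {α : Type*} [Fintype α] {k : ℕ} (hk : Fintype.card α = k)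
    (r : α → α → Prop) [IsStrictTotalOrder α r] : ∃ e : α ≃ Fin k, ∀ a b, e a < e b ↔ r a b := by
  classical
  let := linearOrderOfSTO r
  exact ⟨(Fintype.orderIsoFinOfCardEq α hk).symm.toEquiv,
    fun _ _ => (Fintype.orderIsoFinOfCardEq α hk).symm.lt_iff_lt⟩

section WeakOrder

variable {m : ℕ}

def IsInversion (π : Equiv.Perm (Fin m)) (a b : Fin m) : Prop := a < b ∧ π.symm b < π.symm a

theorem isBiclosed_isInversion (π : Equiv.Perm (Fin m)) : IsBiclosed (IsInversion π) where
  lt _ _ h := h.1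
  trans _ _ _ h h' := ⟨h.1.trans h'.1, h'.2.trans h.2⟩
  cotrans a b c hab hbc h := by
    rcases lt_or_ge (π.symm b) (π.symm a) with hb | hb
    · exact .inl ⟨hab, hb⟩
    · exact .inr ⟨hbc, h.2.trans_le hb⟩

theorem IsBiclosed.exists_isInversion_eq {R : Fin m → Fin m → Prop} (hR : IsBiclosed R) :
    ∃ π : Equiv.Perm (Fin m), IsInversion π = R := by
  have := hR.isStrictTotalOrder_precedes
  obtain ⟨e, he⟩ := exists_equiv_fin_lt_iff (Fintype.card_fin m) (Precedes R)
  refine ⟨e.symm, funext₂ fun a b =>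
    propext ⟨?_, fun h => ⟨hR.lt h, (he b a).2 (.inr ⟨hR.lt h, h⟩)⟩⟩⟩
  rintro ⟨hab, hba⟩
  rcases (he b a).1 hba with ⟨hba, -⟩ | ⟨-, h⟩
  exacts [absurd hab hba.asymm, h]

theorem isInversion_injective : Injective (IsInversion (m := m)) := by
  intro u w h
  have hgt : ∀ a b, b < a → (u.symm a < u.symm b ↔ w.symm a < w.symm b) := fun a b hba =>
    (and_iff_right hba).symm.trans ((congrFun₂ h b a).to_iff.trans (and_iff_right hba))
  have hlt : ∀ a b, u.symm a < u.symm b ↔ w.symm a < w.symm b := by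
    intro a b
    rcases lt_trichotomy a b with hab | rfl | hab
    · rw [← (u.symm.injective.ne hab.ne).le_iff_lt, ← (w.symm.injective.ne hab.ne).le_iff_lt,
        ← not_lt, ← not_lt, hgt b a hab]
    · simp
    · exact hgt a b hab
  have hmono : StrictMono (w.symm ∘ u) := fun x y hxy => by simpa [← hlt] using hxy
  have hid : w.symm ∘ u = id :=
    (hmono.range_inj strictMono_id).1 (by simp [(w.symm.surjective.comp u.surjective).range_eq])
  ext x : 1
  simpa using congrArg w (congrFun hid x)

end WeakOrder

theorem Fin.revPerm_mul_revPerm {k : ℕ} : (Fin.revPerm : Equiv.Perm (Fin k)) * Fin.revPerm = 1 :=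
  Equiv.ext Fin.rev_rev

section WeakOrderLattice

variable {n : ℕ}

theorem wle_iff_isInversion {u v : Equiv.Perm (Fin (2 * n))} :
    wle u v ↔ ∀ a b, IsInversion u a b → IsInversion v a b :=
  ⟨fun h a b hab => h (a := (a, b)) hab, fun h p hp => h p.1 p.2 hp⟩

theorem wle_refl (u : Equiv.Perm (Fin (2 * n))) : wle u u := subset_rfl

theorem wle_antisymm : Std.Antisymm (wle (n := n)) :=
  ⟨fun _ _ huv hvu => isInversion_injective <| funext₂ fun a b =>
    propext ⟨wle_iff_isInversion.1 huv a b, wle_iff_isInversion.1 hvu a b⟩⟩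

theorem exists_isLUBr_wle (u v : Equiv.Perm (Fin (2 * n))) : ∃ j, IsLUBr wle u v j := by
  obtain ⟨j, hj⟩ :=
    ((isBiclosed_isInversion u).transGen_or (isBiclosed_isInversion v)).exists_isInversion_eq
  refine ⟨j, ?_, ?_, fun w hu hv => ?_⟩ <;> rw [wle_iff_isInversion, hj]
  · exact fun a b h => .single (.inl h)
  · exact fun a b h => .single (.inr h)
  · intro a b h
    induction h with
    | single h => exact h.elim (wle_iff_isInversion.1 hu _ _) (wle_iff_isInversion.1 hv _ _)
    | tail _ h ih =>
      exact (isBiclosed_isInversion w).trans ih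
        (h.elim (wle_iff_isInversion.1 hu _ _) (wle_iff_isInversion.1 hv _ _))

theorem isInversion_mul_revPerm (π : Equiv.Perm (Fin (2 * n))) (a b : Fin (2 * n)) :
    IsInversion (π * Fin.revPerm) a b ↔ a < b ∧ ¬IsInversion π a b := by
  refine and_congr_right fun hab => ?_
  simp only [Equiv.Perm.mul_def, Equiv.symm_trans_apply, Fin.revPerm_symm, Fin.revPerm_apply,
    Fin.rev_lt_rev, IsInversion, hab, true_and, not_lt]
  exact ((π.symm.injective.ne hab.ne).le_iff_lt).symm

theorem wle_mul_revPerm_iff {u v : Equiv.Perm (Fin (2 * n))} :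
    wle (u * Fin.revPerm) (v * Fin.revPerm) ↔ wle v u := by
  simp only [wle_iff_isInversion, isInversion_mul_revPerm]
  exact ⟨fun h a b hv => by_contra fun hu => (h a b ⟨(isBiclosed_isInversion v).lt hv, hu⟩).2 hv,
    fun h a b hu => ⟨hu.1, fun hv => hu.2 (h a b hv)⟩⟩

theorem exists_isGLBr_wle (u v : Equiv.Perm (Fin (2 * n))) : ∃ g, IsGLBr wle u v g := by
  obtain ⟨j, hj⟩ := exists_isLUBr_wle (u * Fin.revPerm) (v * Fin.revPerm)
  have := hj.map (le' := flip wle) (fun _ _ => wle_mul_revPerm_iff)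
    (Equiv.mulRight Fin.revPerm).surjective
  rw [mul_assoc, mul_assoc, Fin.revPerm_mul_revPerm, mul_one, mul_one] at this
  exact ⟨j * Fin.revPerm, this⟩

end WeakOrderLattice

section TypeB

variable {n : ℕ}

def revConj (z : Equiv.Perm (Fin (2 * n))) : Equiv.Perm (Fin (2 * n)) :=
  Fin.revPerm * z * Fin.revPerm

theorem revConj_involutive : Involutive (revConj (n := n)) :=
  fun z => Equiv.ext fun x => by simp [revConj]

theorem isInversion_revConj (π : Equiv.Perm (Fin (2 * n))) (a b : Fin (2 * n)) :
    IsInversion (revConj π) a b ↔ IsInversion π b.rev a.rev := by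
  simp [IsInversion, revConj, Equiv.Perm.mul_def, Fin.rev_lt_rev]

theorem wle_revConj_iff {u v : Equiv.Perm (Fin (2 * n))} :
    wle (revConj u) (revConj v) ↔ wle u v := by
  simp only [wle_iff_isInversion, isInversion_revConj]
  exact ⟨fun h a b => by simpa using h b.rev a.rev, fun h a b => h _ _⟩

theorem IsLUBr.revConj {x y j : Equiv.Perm (Fin (2 * n))} (h : IsLUBr wle x y j) :
    IsLUBr wle (revConj x) (revConj y) (revConj j) :=
  h.map (fun _ _ => wle_revConj_iff) revConj_involutive.surjective

theorem IsGLBr.revConj {x y j : Equiv.Perm (Fin (2 * n))} (h : IsGLBr wle x y j) :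
    IsGLBr wle (revConj x) (revConj y) (revConj j) :=
  h.map (fun _ _ => wle_revConj_iff) revConj_involutive.surjective

theorem BGrp.revConj_val (x : BGrp n) : revConj x.1 = x.1 := x.2

theorem revConj_eq_of_isLUBr {x y j : Equiv.Perm (Fin (2 * n))} (hx : revConj x = x)
    (hy : revConj y = y) (h : IsLUBr wle x y j) : revConj j = j := by
  have h' := h.revConj
  rw [hx, hy] at h'
  exact h'.unique wle_antisymm h

theorem revConj_eq_of_isGLBr {x y j : Equiv.Perm (Fin (2 * n))} (hx : revConj x = x)
    (hy : revConj y = y) (h : IsGLBr wle x y j) : revConj j = j := by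
  have h' := h.revConj
  rw [hx, hy] at h'
  exact h'.unique wle_antisymm h

theorem BGrp.isLUBr_val {x y m : BGrp n} (h : IsLUBr ble x y m) : IsLUBr wle x.1 y.1 m.1 :=
  IsLUBr.of_subtype (p := fun π => revConj π = π) wle_antisymm exists_isLUBr_wle
    (fun _ _ _ => revConj_eq_of_isLUBr) h

theorem BGrp.isGLBr_val {x y m : BGrp n} (h : IsGLBr ble x y m) : IsGLBr wle x.1 y.1 m.1 :=
  IsGLBr.of_subtype (p := fun π => revConj π = π) wle_antisymm exists_isGLBr_wle
    (fun _ _ _ => revConj_eq_of_isGLBr) h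

theorem IsCongr.comap_val {r' : Setoid (Equiv.Perm (Fin (2 * n)))} (h : IsCongr wle r') :
    IsCongr ble (r'.comap (Subtype.val : BGrp n → _)) :=
  h.comap BGrp.isLUBr_val BGrp.isGLBr_val

theorem restricts_iff {r' : Setoid (Equiv.Perm (Fin (2 * n)))} {r : Setoid (BGrp n)} :
    Restricts r' r ↔ r'.comap (Subtype.val : BGrp n → _) = r :=
  ⟨fun h => Setoid.ext fun x y => (h x y).symm, fun h => h ▸ fun _ _ => Iff.rfl⟩

theorem ConA.isCongr {r : Setoid (BGrp n)} (h : ConA r) : IsCongr ble r := by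
  obtain ⟨r', hc, hres⟩ := h
  rw [← restricts_iff.1 hres]
  exact hc.comap_val

theorem ConA.inf {r1 r2 : Setoid (BGrp n)} (h1 : ConA r1) (h2 : ConA r2) : ConA (r1 ⊓ r2) := by
  obtain ⟨r1', hc1, hres1⟩ := h1
  obtain ⟨r2', hc2, hres2⟩ := h2
  exact ⟨r1' ⊓ r2', hc1.inf hc2, fun x y => and_congr (hres1 x y) (hres2 x y)⟩

theorem ConA.exists_revConj_invariant {r : Setoid (BGrp n)} (h : ConA r) :
    ∃ r' : Setoid (Equiv.Perm (Fin (2 * n))), IsCongr wle r' ∧ Restricts r' r ∧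
      ∀ a b, r' a b → r' (revConj a) (revConj b) := by
  obtain ⟨r', hc, hres⟩ := h
  refine ⟨r' ⊓ r'.comap revConj, hc.inf (hc.comap IsLUBr.revConj IsGLBr.revConj),
    fun x y => (hres x y).trans ⟨fun h => ⟨h, ?_⟩, And.left⟩, fun a b h => ⟨h.2, ?_⟩⟩
  · show r' (revConj x.1) (revConj y.1)
    rwa [BGrp.revConj_val, BGrp.revConj_val]
  · rw [Setoid.comap_rel, revConj_involutive, revConj_involutive]
    exact h.1

noncomputable def symmPart (z : Equiv.Perm (Fin (2 * n))) : BGrp n :=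
  ⟨Classical.choose (exists_isGLBr_wle z (revConj z)), by
    have hg := Classical.choose_spec (exists_isGLBr_wle z (revConj z))
    have h' := hg.revConj
    rw [revConj_involutive] at h'
    exact h'.symm.unique wle_antisymm hg⟩

theorem isGLBr_symmPart (z : Equiv.Perm (Fin (2 * n))) :
    IsGLBr wle z (revConj z) (symmPart z).1 :=
  Classical.choose_spec (exists_isGLBr_wle z (revConj z))

theorem symmPart_val (x : BGrp n) : symmPart x.1 = x := by
  refine Subtype.ext ((isGLBr_symmPart x.1).unique wle_antisymm ?_)
  rw [BGrp.revConj_val]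
  exact ⟨wle_refl _, wle_refl _, fun _ h _ => h⟩

theorem le_comap_symmPart {r' : Setoid (Equiv.Perm (Fin (2 * n)))} {r s : Setoid (BGrp n)}
    (hc : IsCongr wle r') (hinv : ∀ a b, r' a b → r' (revConj a) (revConj b))
    (hres : Restricts r' r) (hrs : r ≤ s) : r' ≤ s.comap symmPart :=
  fun a b h => hrs ((hres _ _).2
    (hc.2 _ _ _ _ _ _ h (hinv a b h) (isGLBr_symmPart a) (isGLBr_symmPart b)))

theorem ConA.of_isLeast {r1 r2 s : Setoid (BGrp n)} (hA1 : ConA r1) (hA2 : ConA r2)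
    (hs1 : r1 ≤ s) (hs2 : r2 ≤ s) (hmin : ∀ t, IsCongr ble t → r1 ≤ t → r2 ≤ t → s ≤ t) :
    ConA s := by
  obtain ⟨ra, hca, hresa, hinva⟩ := hA1.exists_revConj_invariant
  obtain ⟨rb, hcb, hresb, hinvb⟩ := hA2.exists_revConj_invariant
  have hJ : IsCongr wle (ra ⊔ rb) := hca.sup exists_isLUBr_wle exists_isGLBr_wle hcb
  refine ⟨ra ⊔ rb, hJ, restricts_iff.2 (le_antisymm (fun (x y : BGrp n) h => ?_) ?_)⟩
  · have h' := sup_le (le_comap_symmPart hca hinva hresa hs1)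
      (le_comap_symmPart hcb hinvb hresb hs2) h
    rwa [Setoid.comap_rel, symmPart_val, symmPart_val] at h'
  · exact hmin _ hJ.comap_val (fun x y h => le_sup_left (a := ra) ((hresa x y).1 h))
      (fun x y h => le_sup_right (b := rb) ((hresb x y).1 h))

end TypeB

theorem stmt18_general (n : ℕ) (r1 r2 : Setoid (BGrp n))
    (hA1 : ConA r1) (hA2 : ConA r2) :
    (∀ m : Setoid (BGrp n), (∀ x y, m.r x y ↔ (r1.r x y ∧ r2.r x y)) →
        IsCongr ble m ∧ ConA m) ∧
    (∀ s : Setoid (BGrp n), IsCongr ble s → setle r1 s → setle r2 s →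
        (∀ t : Setoid (BGrp n), IsCongr ble t → setle r1 t → setle r2 t → setle s t) →
        ConA s) := by
  refine ⟨fun m hm => ?_, fun s _ hs1 hs2 hmin => ?_⟩
  · obtain rfl : m = r1 ⊓ r2 := Setoid.ext fun x y => (hm x y).trans Setoid.inf_iff_and.symm
    exact ⟨(hA1.inf hA2).isCongr, hA1.inf hA2⟩
  · exact hA1.of_isLeast hA2 hs1 hs2 hmin

/-- `Con_A(B_n)` is closed under meet (intersection of relations) and join in the
congruence lattice of the weak order on `B_n`; that is, it induces a sublattice of
`Con(B_n)`. -/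
theorem stmt18 (n : ℕ) (r1 r2 : Setoid (BGrp n))
    (h1 : IsCongr ble r1) (h2 : IsCongr ble r2) (hA1 : ConA r1) (hA2 : ConA r2) :
    (∀ m : Setoid (BGrp n), (∀ x y, m.r x y ↔ (r1.r x y ∧ r2.r x y)) →
        IsCongr ble m ∧ ConA m) ∧
    (∀ s : Setoid (BGrp n), IsCongr ble s → setle r1 s → setle r2 s →
        (∀ t : Setoid (BGrp n), IsCongr ble t → setle r1 t → setle r2 t → setle s t) →
        ConA s) :=
  stmt18_general n r1 r2 hA1 hA2
end

section
/- Let Θ be a lattice congruence on the weak order on B_n. If Θ is the restriction of some lattice congruence on the weak order on S_{2n}, then Θ is also the restriction of a symmetric congruence on S_{2n}, i.e., a congruence Θ' such that π ≡_{Θ'} τ iff w0 π w0 ≡_{Θ'} w0 τ w0 for all π, τ. -/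
/-- A congruence on `S_{2n}` is symmetric if it is invariant under conjugation
by the longest element `w₀`. -/
def SymCong {n : ℕ} (r' : Setoid (Equiv.Perm (Fin (2 * n)))) : Prop :=
  ∀ π τ : Equiv.Perm (Fin (2 * n)),
    r'.r π τ ↔ r'.r (Fin.revPerm * π * Fin.revPerm) (Fin.revPerm * τ * Fin.revPerm)

def cnj {n : ℕ} (π : Equiv.Perm (Fin (2 * n))) : Equiv.Perm (Fin (2 * n)) :=
  Fin.revPerm * π * Fin.revPerm

lemma rev_sq {m : ℕ} : (Fin.revPerm : Equiv.Perm (Fin m)) * Fin.revPerm = 1 := by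
  ext x; simp

lemma cnj_cnj {n : ℕ} (π : Equiv.Perm (Fin (2 * n))) : cnj (cnj π) = π := by
  unfold cnj
  rw [show Fin.revPerm * (Fin.revPerm * π * Fin.revPerm) * Fin.revPerm
      = (Fin.revPerm * Fin.revPerm) * π * (Fin.revPerm * Fin.revPerm) by group,
    rev_sq]
  simp

lemma cnj_symm_apply {n : ℕ} (π : Equiv.Perm (Fin (2 * n))) (q : Fin (2 * n)) :
    (cnj π).symm q = Fin.rev (π.symm (Fin.rev q)) := by
  rw [Equiv.symm_apply_eq]
  simp [cnj, Equiv.Perm.mul_apply]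

lemma mem_invSet_cnj {n : ℕ} (π : Equiv.Perm (Fin (2 * n))) (p : Fin (2 * n) × Fin (2 * n)) :
    p ∈ invSet (cnj π) ↔ (p.2.rev, p.1.rev) ∈ invSet π := by
  simp only [invSet, Set.mem_setOf_eq, cnj_symm_apply, Fin.rev_lt_rev]

lemma wle_cnj {n : ℕ} {u w : Equiv.Perm (Fin (2 * n))} (h : wle u w) : wle (cnj u) (cnj w) := by
  intro p hp
  rw [mem_invSet_cnj] at hp ⊢
  exact h hp

lemma wle_cnj_iff {n : ℕ} {u w : Equiv.Perm (Fin (2 * n))} :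
    wle (cnj u) (cnj w) ↔ wle u w := by
  constructor
  · intro h; have := wle_cnj h; rwa [cnj_cnj, cnj_cnj] at this
  · exact wle_cnj

lemma isLUBr_cnj {n : ℕ} {x y m : Equiv.Perm (Fin (2 * n))} (h : IsLUBr wle x y m) :
    IsLUBr wle (cnj x) (cnj y) (cnj m) := by
  obtain ⟨h1, h2, h3⟩ := h
  refine ⟨wle_cnj h1, wle_cnj h2, fun b hb1 hb2 => ?_⟩
  have hx' := wle_cnj hb1
  have hy' := wle_cnj hb2
  rw [cnj_cnj] at hx' hy'
  have := wle_cnj (h3 (cnj b) hx' hy')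
  rwa [cnj_cnj] at this

lemma isGLBr_cnj {n : ℕ} {x y m : Equiv.Perm (Fin (2 * n))} (h : IsGLBr wle x y m) :
    IsGLBr wle (cnj x) (cnj y) (cnj m) := by
  obtain ⟨h1, h2, h3⟩ := h
  refine ⟨wle_cnj h1, wle_cnj h2, fun b hb1 hb2 => ?_⟩
  have hx' := wle_cnj hb1
  have hy' := wle_cnj hb2
  rw [cnj_cnj] at hx' hy'
  have := wle_cnj (h3 (cnj b) hx' hy')
  rwa [cnj_cnj] at this


/-- If a lattice congruence `r` of the weak order on `B_n` is the restriction of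
some lattice congruence of the weak order on `S_{2n}`, then it is the restriction
of a *symmetric* congruence of the weak order on `S_{2n}`. -/
theorem stmt19 (n : ℕ) (r : Setoid (BGrp n)) (hr : IsCongr ble r)
    (h : ∃ r' : Setoid (Equiv.Perm (Fin (2 * n))), IsCongr wle r' ∧ Restricts r' r) :
    ∃ r'' : Setoid (Equiv.Perm (Fin (2 * n))),
      IsCongr wle r'' ∧ SymCong r'' ∧ Restricts r'' r := by
  obtain ⟨r', hc, hres⟩ := h
  refine ⟨⟨fun x y => r'.r x y ∧ r'.r (cnj x) (cnj y),
    ⟨fun x => ⟨r'.refl x, r'.refl _⟩,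
     fun h => ⟨r'.symm h.1, r'.symm h.2⟩,
     fun h1 h2 => ⟨r'.trans h1.1 h2.1, r'.trans h1.2 h2.2⟩⟩⟩, ?_, ?_, ?_⟩
  · constructor
    · intro x1 x2 y1 y2 m1 m2 hx hy hm1 hm2
      exact ⟨hc.1 _ _ _ _ _ _ hx.1 hy.1 hm1 hm2,
        hc.1 _ _ _ _ _ _ hx.2 hy.2 (isLUBr_cnj hm1) (isLUBr_cnj hm2)⟩
    · intro x1 x2 y1 y2 m1 m2 hx hy hm1 hm2
      exact ⟨hc.2 _ _ _ _ _ _ hx.1 hy.1 hm1 hm2,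
        hc.2 _ _ _ _ _ _ hx.2 hy.2 (isGLBr_cnj hm1) (isGLBr_cnj hm2)⟩
  · intro π τ
    show r'.r π τ ∧ r'.r (cnj π) (cnj τ) ↔ r'.r (cnj π) (cnj τ) ∧ r'.r (cnj (cnj π)) (cnj (cnj τ))
    rw [cnj_cnj, cnj_cnj]
    tauto
  · intro x y
    show r.r x y ↔ r'.r x.val y.val ∧ r'.r (cnj x.val) (cnj y.val)
    have hx : cnj x.val = x.val := x.property
    have hy : cnj y.val = y.val := y.property
    rw [hx, hy, and_self]
    exact hres x y
end
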